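/- Let 1 ≤ p ≤ 2 and 0 < α ≤ 1. Suppose that the α-snowflake of L_p(0,1) admits a bi-Lipschitz embedding into a Hilbert space, i.e. there exist a real Hilbert space H, a map T : L_p(0,1) → H, and constants A, B > 0 with A·‖f − g‖_p^α ≤ ‖T(f) − T(g)‖_H ≤ B·‖f − g‖_p^α for all f, g ∈ L_p(0,1). Then α ≤ p/2. -/

import Mathlib

/-!
Enflo's inequality: for any map `g` from the Hamming cube `{0,1}ⁿ` to a Hilbert space, the sum of
the squared lengths of the `2ⁿ` antipodal diagonals is at most the sum of the squared lengths of
the `n 2ⁿ` edges; it follows by induction on `n` from the quadrilateral inequality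
`‖a - c‖² + ‖b - d‖² ≤ ‖a - b‖² + ‖b - c‖² + ‖c - d‖² + ‖d - a‖²`.
In `L_p(0,1)` the cube is realised by sums of indicators of the intervals `(i/n, (i+1)/n)`:
antipodal points are at distance `1` and neighbours at distance `n^(-1/p)`. Applied to the image
of this cube, Enflo's inequality gives `A² ≤ n · B² n^(-2α/p)` for every `n`, hence `2α/p ≤ 1`.
-/

open MeasureTheory Set Filter Topology
open scoped symmDiff ENNReal

theorem norm_sub_sq_add_norm_sub_sq_le {H : Type*} [NormedAddCommGroup H] [InnerProductSpace ℝ H]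
    (a b c d : H) :
    ‖a - c‖ ^ 2 + ‖b - d‖ ^ 2 ≤ ‖a - b‖ ^ 2 + ‖b - c‖ ^ 2 + ‖c - d‖ ^ 2 + ‖d - a‖ ^ 2 := by
  have h := sq_nonneg ‖a - b + (c - d)‖
  simp only [norm_add_sq_real, norm_sub_sq_real, inner_sub_left, inner_sub_right] at h ⊢
  linarith [real_inner_comm a b, real_inner_comm a c, real_inner_comm a d, real_inner_comm b c,
    real_inner_comm b d, real_inner_comm c d]

namespace HammingCube

variable {E : Type*} [SeminormedAddCommGroup E] {n : ℕ}

def antipodalSum (g : (Fin n → Bool) → E) : ℝ := ∑ ε, ‖g ε - g εᶜ‖ ^ 2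

def edgeSum (g : (Fin n → Bool) → E) : ℝ :=
  ∑ i, ∑ ε, ‖g ε - g (Function.update ε i (!ε i))‖ ^ 2

/-- The sum over the edges joining the two facets `ε 0 = true` and `ε 0 = false`. -/
def crossSum (g : (Fin (n + 1) → Bool) → E) : ℝ :=
  ∑ ε, ‖g (Fin.cons true ε) - g (Fin.cons false ε)‖ ^ 2

theorem compl_cons (b : Bool) (ε : Fin n → Bool) :
    (Fin.cons b ε : Fin (n + 1) → Bool)ᶜ = Fin.cons (!b) εᶜ := by
  ext i; cases i using Fin.cases <;> simp

theorem sum_cons (F : (Fin (n + 1) → Bool) → ℝ) :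
    ∑ ε, F ε = ∑ ε, (F (Fin.cons true ε) + F (Fin.cons false ε)) := by
  rw [← (Fin.consEquiv fun _ => Bool).sum_comp F, Fintype.sum_prod_type, Fintype.sum_bool,
    ← Finset.sum_add_distrib]
  rfl

theorem sum_compl (F : (Fin n → Bool) → ℝ) : ∑ ε, F εᶜ = ∑ ε, F ε :=
  Equiv.sum_comp (compl_involutive.toPerm _) F

theorem edgeSum_succ (g : (Fin (n + 1) → Bool) → E) :
    edgeSum g = 2 * crossSum g + edgeSum (fun ε => g (Fin.cons true ε))
      + edgeSum (fun ε => g (Fin.cons false ε)) := by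
  rw [edgeSum, Fin.sum_univ_succ, add_assoc, edgeSum, edgeSum, ← Finset.sum_add_distrib]
  congr 1
  · rw [sum_cons, crossSum, Finset.mul_sum]
    refine Finset.sum_congr rfl fun ε _ => ?_
    simp only [Fin.cons_zero, Bool.not_true, Bool.not_false, Fin.update_cons_zero,
      norm_sub_rev (g (Fin.cons false ε))]
    ring
  · refine Finset.sum_congr rfl fun j _ => ?_
    rw [sum_cons, ← Finset.sum_add_distrib]
    simp only [Fin.cons_succ, ← Fin.cons_update]

variable {H : Type*} [NormedAddCommGroup H] [InnerProductSpace ℝ H]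

/-- Each antipodal pair of the `(n + 1)`-cube is the pair of diagonals of a quadrilateral whose
other sides are an antipodal pair of a facet and two edges crossing between the facets. -/
theorem antipodalSum_succ_le (g : (Fin (n + 1) → Bool) → H) :
    antipodalSum g ≤ antipodalSum (fun ε => g (Fin.cons true ε))
      + antipodalSum (fun ε => g (Fin.cons false ε)) + 2 * crossSum g := by
  have hcross : ∑ ε : Fin n → Bool, ‖g (Fin.cons true εᶜ) - g (Fin.cons false εᶜ)‖ ^ 2
      = crossSum g := sum_compl fun ε => ‖g (Fin.cons true ε) - g (Fin.cons false ε)‖ ^ 2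
  calc antipodalSum g
      = ∑ ε, (‖g (Fin.cons true ε) - g (Fin.cons false εᶜ)‖ ^ 2
          + ‖g (Fin.cons true εᶜ) - g (Fin.cons false ε)‖ ^ 2) := by
        rw [antipodalSum, sum_cons]
        simp only [compl_cons, Bool.not_true, Bool.not_false, norm_sub_rev (g (Fin.cons false _))]
    _ ≤ ∑ ε, (‖g (Fin.cons true ε) - g (Fin.cons true εᶜ)‖ ^ 2
          + ‖g (Fin.cons true εᶜ) - g (Fin.cons false εᶜ)‖ ^ 2
          + ‖g (Fin.cons false εᶜ) - g (Fin.cons false ε)‖ ^ 2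
          + ‖g (Fin.cons false ε) - g (Fin.cons true ε)‖ ^ 2) :=
        Finset.sum_le_sum fun ε _ => norm_sub_sq_add_norm_sub_sq_le _ _ _ _
    _ = _ := by
        simp only [Finset.sum_add_distrib, hcross, antipodalSum, crossSum]
        simp only [norm_sub_rev (g (Fin.cons false _)) (g (Fin.cons true _)),
          norm_sub_rev (g (Fin.cons false (_ : Fin n → Bool)ᶜ))]
        ring

/-- Enflo's inequality: Hilbert space has Enflo type 2 with constant 1. -/
theorem antipodalSum_le_edgeSum (g : (Fin n → Bool) → H) : antipodalSum g ≤ edgeSum g := by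
  induction n with
  | zero =>
    have hcompl (ε : Fin 0 → Bool) : εᶜ = ε := Subsingleton.elim _ _
    simp [antipodalSum, edgeSum, hcompl]
  | succ n ih =>
    rw [edgeSum_succ]
    linarith [antipodalSum_succ_le g, ih fun ε => g (Fin.cons true ε),
      ih fun ε => g (Fin.cons false ε)]

theorem sq_le_mul_sq_of_le_norm_sub_compl {g : (Fin n → Bool) → H} {a b : ℝ} (ha : 0 ≤ a)
    (hanti : ∀ ε, a ≤ ‖g ε - g εᶜ‖)
    (hedge : ∀ ε i, ‖g ε - g (Function.update ε i (!ε i))‖ ≤ b) :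
    a ^ 2 ≤ n * b ^ 2 := by
  have hlow : 2 ^ n * a ^ 2 ≤ antipodalSum g := by
    simpa [antipodalSum] using Finset.sum_le_sum (s := Finset.univ) fun ε _ =>
      pow_le_pow_left₀ ha (hanti ε) 2
  have hup : edgeSum g ≤ 2 ^ n * (n * b ^ 2) := by
    have := Finset.sum_le_sum (s := Finset.univ) fun i _ =>
      Finset.sum_le_sum (s := Finset.univ) fun ε _ =>
        pow_le_pow_left₀ (norm_nonneg _) (hedge ε i) 2
    simp only [Finset.sum_const, Finset.card_univ, nsmul_eq_mul, Fintype.card_fin,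
      Fintype.card_pi, Fintype.card_bool, Finset.prod_const] at this
    rw [edgeSum]
    push_cast at this
    linarith
  exact le_of_mul_le_mul_left ((hlow.trans (antipodalSum_le_edgeSum g)).trans hup) (by positivity)

end HammingCube

theorem Set.biUnion_symmDiff_biUnion {α ι : Type*} {I : ι → Set α}
    (hI : Pairwise (Function.onFun Disjoint I)) (s t : Set ι) :
    (⋃ i ∈ s, I i) ∆ (⋃ i ∈ t, I i) = ⋃ i ∈ s ∆ t, I i := by
  ext x
  by_cases hx : ∃ i, x ∈ I i
  · obtain ⟨j, hj⟩ := hx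
    have hmem (i : ι) : x ∈ I i ↔ i = j :=
      ⟨fun hi => by_contra fun hij => disjoint_left.1 (hI hij) hi hj, fun h => h ▸ hj⟩
    simp [mem_symmDiff, hmem]
  · push Not at hx
    simp [mem_symmDiff, hx]

theorem hammingDist_compl {ι : Type*} [Fintype ι] (ε : ι → Bool) :
    hammingDist ε εᶜ = Fintype.card ι := by
  simp [hammingDist]

theorem hammingDist_update_not {ι : Type*} [Fintype ι] [DecidableEq ι] (ε : ι → Bool) (i : ι) :
    hammingDist ε (Function.update ε i (!ε i)) = 1 := by
  rw [hammingDist, Finset.card_eq_one]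
  refine ⟨i, ?_⟩
  ext j
  by_cases h : j = i
  · subst h; simp
  · simp [h]

namespace HammingCube

variable {α ι : Type*} [MeasurableSpace α] [Fintype ι] {μ : Measure α} [IsFiniteMeasure μ]
  {I : ι → Set α}

noncomputable def indicatorLp (p : ℝ≥0∞) (μ : Measure α) [IsFiniteMeasure μ]
    (hI : ∀ i, MeasurableSet (I i)) (ε : ι → Bool) : Lp ℝ p μ :=
  indicatorConstLp p (MeasurableSet.biUnion (to_countable {i | ε i}) fun i _ => hI i)
    (measure_ne_top μ _) 1

theorem norm_indicatorLp_sub {p : ℝ≥0∞} (hp0 : p ≠ 0) (hptop : p ≠ ∞)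
    (hI : ∀ i, MeasurableSet (I i)) (hdisj : Pairwise (Function.onFun Disjoint I)) {m : ℝ}
    (hm : ∀ i, μ.real (I i) = m) (ε ε' : ι → Bool) :
    ‖indicatorLp p μ hI ε - indicatorLp p μ hI ε'‖ = (hammingDist ε ε' * m) ^ (1 / p.toReal) := by
  classical
  have hsymm : {i | ε' i} ∆ {i | ε i} = ↑(Finset.univ.filter fun i => ε i ≠ ε' i) := by
    ext i
    cases h : ε i <;> cases h' : ε' i <;> simp [mem_symmDiff, h, h']
  rw [← neg_add_eq_sub, ← Lp.dist_eq_norm, indicatorLp, indicatorLp,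
    dist_indicatorConstLp_eq_norm, norm_indicatorConstLp hp0 hptop,
    biUnion_symmDiff_biUnion hdisj, hsymm, Finset.set_biUnion_coe,
    measureReal_biUnion_finset (fun i _ j _ hij => hdisj hij) (fun i _ => hI i)]
  simp [hm, hammingDist]

end HammingCube

def subinterval (n : ℕ) (i : Fin n) : Set ℝ := Ioo (i / n) ((i + 1) / n)

theorem measurableSet_subinterval (n : ℕ) (i : Fin n) : MeasurableSet (subinterval n i) :=
  measurableSet_Ioo

theorem pairwise_disjoint_subinterval (n : ℕ) :
    Pairwise (Function.onFun Disjoint (subinterval n)) := by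
  have key : ∀ i j : Fin n, i < j → Disjoint (subinterval n i) (subinterval n j) := by
    intro i j hij
    refine disjoint_left.2 fun x hi hj => ?_
    have : ((i : ℝ) + 1) / n ≤ j / n := by
      gcongr
      exact_mod_cast hij
    linarith [hi.2, hj.1]
  intro i j hij
  rcases hij.lt_or_gt with h | h
  · exact key i j h
  · exact (key j i h).symm

theorem subinterval_subset (n : ℕ) (i : Fin n) : subinterval n i ⊆ Ioo 0 1 := by
  have hn : (0 : ℝ) < n := by exact_mod_cast i.pos
  refine Ioo_subset_Ioo (by positivity) ((div_le_one hn).2 ?_)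
  exact_mod_cast i.isLt

theorem measureReal_subinterval (n : ℕ) (i : Fin n) :
    (volume.restrict (Ioo (0 : ℝ) 1)).real (subinterval n i) = (n : ℝ)⁻¹ := by
  rw [measureReal_restrict_apply (measurableSet_subinterval n i),
    inter_eq_left.2 (subinterval_subset n i), subinterval,
    Real.volume_real_Ioo_of_le (by gcongr; linarith)]
  ring

noncomputable def unitIntervalCube (p : ℝ) (n : ℕ) :
    (Fin n → Bool) → Lp ℝ (ENNReal.ofReal p) (volume.restrict (Ioo (0 : ℝ) 1)) :=
  HammingCube.indicatorLp _ _ (measurableSet_subinterval n)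

theorem norm_unitIntervalCube_sub {p : ℝ} (hp : 0 < p) {n : ℕ} (ε ε' : Fin n → Bool) :
    ‖unitIntervalCube p n ε - unitIntervalCube p n ε'‖
      = (hammingDist ε ε' * (n : ℝ)⁻¹) ^ (1 / p) := by
  rw [unitIntervalCube, HammingCube.norm_indicatorLp_sub (by simpa using hp) ENNReal.ofReal_ne_top
    (measurableSet_subinterval n) (pairwise_disjoint_subinterval n) (measureReal_subinterval n),
    ENNReal.toReal_ofReal hp.le]

theorem nonpos_of_forall_le_mul_natCast_rpow_neg {a C t : ℝ} (ha : 0 < a)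
    (h : ∀ n : ℕ, 0 < n → a ≤ C * (n : ℝ) ^ (-t)) : t ≤ 0 := by
  by_contra! ht
  have hlim : Tendsto (fun n : ℕ => C * (n : ℝ) ^ (-t)) atTop (𝓝 0) := by
    simpa using ((tendsto_rpow_neg_atTop ht).comp tendsto_natCast_atTop_atTop).const_mul C
  have := ge_of_tendsto hlim ((eventually_gt_atTop 0).mono h)
  linarith

theorem Lp01_snowflake_embedding_exponent_upper_bound_general
    (p α : ℝ) (hp1 : 1 ≤ p)
    (H : Type) [NormedAddCommGroup H] [InnerProductSpace ℝ H]
    (T : Lp ℝ (ENNReal.ofReal p) (volume.restrict (Set.Ioo (0 : ℝ) 1)) → H)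
    (A B : ℝ) (hA : 0 < A)
    (hT : ∀ f g : Lp ℝ (ENNReal.ofReal p) (volume.restrict (Set.Ioo (0 : ℝ) 1)),
      A * ‖f - g‖ ^ α ≤ ‖T f - T g‖ ∧ ‖T f - T g‖ ≤ B * ‖f - g‖ ^ α) :
    α ≤ p / 2 := by
  have hp0 : 0 < p := by linarith
  suffices 2 * α / p - 1 ≤ 0 by
    rw [sub_nonpos, div_le_one hp0] at this
    linarith
  refine nonpos_of_forall_le_mul_natCast_rpow_neg (C := B ^ 2) (pow_pos hA 2) fun n hn => ?_
  have hn' : (0 : ℝ) < n := by exact_mod_cast hn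
  have hedge : ((1 * (n : ℝ)⁻¹) ^ (1 / p)) ^ α = (n : ℝ) ^ (-(α / p)) := by
    rw [one_mul, ← Real.rpow_mul (by positivity), Real.inv_rpow hn'.le, ← Real.rpow_neg hn'.le]
    ring_nf
  have hexp : (n : ℝ) ^ (-(2 * α / p - 1)) = n * ((n : ℝ) ^ (-(α / p))) ^ 2 := by
    rw [show -(2 * α / p - 1) = 1 + (-(α / p) + -(α / p)) by ring, Real.rpow_add hn',
      Real.rpow_add hn', Real.rpow_one, sq]
  have key := HammingCube.sq_le_mul_sq_of_le_norm_sub_compl (g := T ∘ unitIntervalCube p n)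
    (b := B * (n : ℝ) ^ (-(α / p))) hA.le
    (fun ε => by
      simpa [norm_unitIntervalCube_sub hp0, hammingDist_compl, hn'.ne'] using
        (hT (unitIntervalCube p n ε) (unitIntervalCube p n εᶜ)).1)
    (fun ε i => by
      have := (hT (unitIntervalCube p n ε) (unitIntervalCube p n (Function.update ε i (!ε i)))).2
      rwa [norm_unitIntervalCube_sub hp0, hammingDist_update_not, Nat.cast_one, hedge] at this)
  rw [hexp]
  linarith

/-- For `1 ≤ p ≤ 2` and `0 < α ≤ 1`: if the `α`-snowflake of `L_p(0,1)`
admits a bi-Lipschitz embedding into a Hilbert space, i.e. there are a real Hilbert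
space `H`, a map `T : L_p(0,1) → H`, and constants `A, B > 0` with
`A·‖f-g‖_p^α ≤ ‖T f - T g‖ ≤ B·‖f-g‖_p^α` for all `f, g ∈ L_p(0,1)`, then `α ≤ p/2`.
Here `L_p(0,1)` is modelled as `Lp ℝ p` of Lebesgue measure restricted to `(0,1)`. -/
theorem Lp01_snowflake_embedding_exponent_upper_bound
    (p α : ℝ) (hp1 : 1 ≤ p) (hp2 : p ≤ 2) (hα0 : 0 < α) (hα1 : α ≤ 1)
    (H : Type) [NormedAddCommGroup H] [InnerProductSpace ℝ H] [CompleteSpace H]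
    (T : Lp ℝ (ENNReal.ofReal p) (volume.restrict (Set.Ioo (0 : ℝ) 1)) → H)
    (A B : ℝ) (hA : 0 < A) (hB : 0 < B)
    (hT : ∀ f g : Lp ℝ (ENNReal.ofReal p) (volume.restrict (Set.Ioo (0 : ℝ) 1)),
      A * ‖f - g‖ ^ α ≤ ‖T f - T g‖ ∧ ‖T f - T g‖ ≤ B * ‖f - g‖ ^ α) :
    α ≤ p / 2 :=
  Lp01_snowflake_embedding_exponent_upper_bound_general p α hp1 H T A B hA hT
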